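/- arXiv:1108.4391 — 5 statements merged into one kernel-verified Lean document; each statement's English description precedes it below -/
import Mathlib

section
/- For every nonnegative integer n, the number of partitions of n into at most 3 parts equals the integer nearest to (n+3)^2/12. -/
/-!
Padding a partition of `n` into at most three parts with zeros and sorting identifies it with a
triple `a ≤ b ≤ c` of naturals summing to `n`. Splitting such triples according to whether
`a = 0` (a partition into at most two parts, of which there are `⌊n / 2⌋ + 1`) or not (subtract
one from every entry) gives `p₃(n + 3) = p₃(n) + ⌊(n + 3) / 2⌋ + 1`, hence
`p₃(n + 6) = p₃(n) + n + 6`. Since `((n + 9)² - (n + 3)²) / 12 = n + 6` as well, the closed form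
`p₃(n) = ⌊((n + 3)² + 6) / 12⌋` follows from its six base cases, and this is the nearest integer
to `(n + 3)² / 12`.
-/

/-- `pParts m n` is the number of partitions of `n` into at most `m` parts. -/
def pParts (m n : ℕ) : ℕ :=
  Fintype.card {p : n.Partition // p.parts.card ≤ m}

open Finset

theorem Multiset.filter_ne_add_replicate {α : Type*} [DecidableEq α] (s : Multiset α) (a : α) :
    s.filter (· ≠ a) + replicate (s.card - (s.filter (· ≠ a)).card) a = s := by
  conv_rhs => rw [← filter_add_not (· ≠ a) s]
  have hcard := card_add (s.filter (· ≠ a)) (s.filter (fun x => ¬ x ≠ a))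
  rw [filter_add_not] at hcard
  simp only [ne_eq, Decidable.not_not, filter_eq', card_replicate] at hcard ⊢
  rw [hcard, Nat.add_sub_cancel_left]

theorem Multiset.sort_triple_of_le {α : Type*} [LinearOrder α] {a b c : α} (hab : a ≤ b)
    (hbc : b ≤ c) : sort {a, b, c} = [a, b, c] := by
  rw [insert_eq_cons, insert_eq_cons, sort_cons, sort_cons, sort_singleton]
  · simpa using hbc
  · simpa using ⟨hab, hab.trans hbc⟩

theorem Multiset.exists_sorted_triple_of_card_eq_three {α : Type*} [LinearOrder α]
    {s : Multiset α} (hs : s.card = 3) : ∃ a b c, a ≤ b ∧ b ≤ c ∧ s = {a, b, c} := by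
  obtain ⟨a, b, c, habc⟩ := List.length_eq_three.1 (show (sort s).length = 3 by
    rw [length_sort, hs])
  have hsorted := pairwise_sort s (· ≤ ·)
  rw [habc] at hsorted
  simp only [List.pairwise_cons, List.mem_cons, List.not_mem_nil, or_false, forall_eq_or_imp,
    forall_eq] at hsorted
  exact ⟨a, b, c, hsorted.1.1, hsorted.2.1, by rw [← sort_eq s (· ≤ ·), habc]; rfl⟩

namespace Nat.Partition

def partsCardLeEquiv (n m : ℕ) :
    {p : n.Partition // p.parts.card ≤ m} ≃ {s : Multiset ℕ // s.card = m ∧ s.sum = n} where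
  toFun p := ⟨p.1.parts + .replicate (m - p.1.parts.card) 0,
    by simp only [Multiset.card_add, Multiset.card_replicate]; omega,
    by simp [p.1.parts_sum]⟩
  invFun s := ⟨ofSums n s.1 s.2.2, (Multiset.card_le_card (Multiset.filter_le _ _)).trans s.2.1.le⟩
  left_inv p := by
    ext1; ext1
    simp [Multiset.filter_add, Multiset.filter_eq_self.mpr fun _ hi => (p.1.parts_pos hi).ne',
      Multiset.mem_replicate]
  right_inv s := by
    ext1
    simpa [s.2.1] using Multiset.filter_ne_add_replicate s.1 0

end Nat.Partition

def sortedTriples (n : ℕ) : Finset (ℕ × ℕ × ℕ) :=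
  (range (n + 1) ×ˢ range (n + 1) ×ˢ range (n + 1)).filter
    fun t => t.1 ≤ t.2.1 ∧ t.2.1 ≤ t.2.2 ∧ t.1 + t.2.1 + t.2.2 = n

@[simp]
theorem mem_sortedTriples {n : ℕ} {t : ℕ × ℕ × ℕ} :
    t ∈ sortedTriples n ↔ t.1 ≤ t.2.1 ∧ t.2.1 ≤ t.2.2 ∧ t.1 + t.2.1 + t.2.2 = n := by
  simp only [sortedTriples, mem_filter, mem_product, mem_range, and_iff_right_iff_imp]
  omega

theorem natCard_multiset_card_eq_three_sum_eq (n : ℕ) :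
    Nat.card {s : Multiset ℕ // s.card = 3 ∧ s.sum = n} = #(sortedTriples n) := by
  rw [← Nat.card_eq_finsetCard]
  refine (Nat.card_eq_of_bijective (fun t => ⟨{t.1.1, t.1.2.1, t.1.2.2}, by
    obtain ⟨-, -, hsum⟩ := mem_sortedTriples.1 t.2
    simp only [Multiset.insert_eq_cons, Multiset.card_cons, Multiset.card_singleton,
      Multiset.sum_cons, Multiset.sum_singleton, true_and]
    omega⟩) ⟨?_, ?_⟩).symm
  · rintro ⟨⟨a, b, c⟩, ht⟩ ⟨⟨a', b', c'⟩, ht'⟩ h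
    rw [mem_sortedTriples] at ht ht'
    have hsort := congrArg (fun s => Multiset.sort s.1) h
    simp only [Multiset.sort_triple_of_le ht.1 ht.2.1, Multiset.sort_triple_of_le ht'.1 ht'.2.1,
      List.cons.injEq, and_true] at hsort
    obtain ⟨rfl, rfl, rfl⟩ := hsort
    rfl
  · rintro ⟨s, hcard, hsum⟩
    obtain ⟨a, b, c, hab, hbc, rfl⟩ := Multiset.exists_sorted_triple_of_card_eq_three hcard
    refine ⟨⟨(a, b, c), mem_sortedTriples.2 ⟨hab, hbc, ?_⟩⟩, rfl⟩
    simpa [add_assoc] using hsum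

theorem card_sortedTriples_filter_fst_eq_zero (n : ℕ) :
    #((sortedTriples n).filter (·.1 = 0)) = n / 2 + 1 := by
  rw [← card_range (n / 2 + 1)]
  refine card_nbij' (·.2.1) (fun b => (0, b, n - b)) ?_ ?_ ?_ ?_ <;> intro t <;>
    simp only [mem_coe, mem_filter, mem_sortedTriples, mem_range, Prod.ext_iff, true_and,
      and_true, implies_true] <;> omega

theorem card_sortedTriples_filter_fst_ne_zero (n : ℕ) :
    #((sortedTriples (n + 3)).filter (·.1 ≠ 0)) = #(sortedTriples n) := by
  refine card_nbij' (fun t => (t.1 - 1, t.2.1 - 1, t.2.2 - 1))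
    (fun t => (t.1 + 1, t.2.1 + 1, t.2.2 + 1)) ?_ ?_ ?_ ?_ <;> intro t <;>
    simp only [mem_coe, mem_filter, mem_sortedTriples, Prod.ext_iff] <;> omega

theorem card_sortedTriples_add_three (n : ℕ) :
    #(sortedTriples (n + 3)) = #(sortedTriples n) + ((n + 3) / 2 + 1) := by
  rw [← card_filter_add_card_filter_not (·.1 = 0), card_sortedTriples_filter_fst_eq_zero,
    card_sortedTriples_filter_fst_ne_zero, add_comm]

theorem card_sortedTriples_add_six (n : ℕ) :
    #(sortedTriples (n + 6)) = #(sortedTriples n) + (n + 6) := by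
  have h₃ := card_sortedTriples_add_three n
  have h₆ : #(sortedTriples (n + 6)) = #(sortedTriples (n + 3)) + ((n + 6) / 2 + 1) :=
    card_sortedTriples_add_three (n + 3)
  omega

theorem card_sortedTriples : ∀ n, #(sortedTriples n) = ((n + 3) ^ 2 + 6) / 12
  | 0 | 1 | 2 | 3 | 4 | 5 => by decide
  | n + 6 => by
    rw [card_sortedTriples_add_six, card_sortedTriples n,
      show (n + 6 + 3) ^ 2 + 6 = (n + 3) ^ 2 + 6 + 12 * (n + 6) by ring,
      Nat.add_mul_div_left _ _ (by norm_num)]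

theorem Rat.round_intCast_div_natCast (x : ℤ) (d : ℕ) :
    round ((x : ℚ) / d) = (2 * x + d) / (2 * d : ℤ) := by
  rcases eq_or_ne d 0 with rfl | hd
  · simp
  rw [round_eq, show (x : ℚ) / d + 1 / 2 = ((2 * x + d : ℤ) : ℚ) / ((2 * d : ℕ) : ℚ) by
    push_cast; field_simp, Rat.floor_intCast_div_natCast]
  push_cast
  rfl

theorem p3_eq_round (n : ℕ) :
    (pParts 3 n : ℤ) = round (((n : ℚ) + 3) ^ 2 / 12) := by
  have hcast : ((n : ℚ) + 3) ^ 2 / 12 = (((n + 3) ^ 2 : ℕ) : ℤ) / ((12 : ℕ) : ℚ) := by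
    push_cast; ring
  rw [pParts, Fintype.card_eq_nat_card, Nat.card_congr (Nat.Partition.partsCardLeEquiv n 3),
    natCard_multiset_card_eq_three_sum_eq, card_sortedTriples, hcast,
    Rat.round_intCast_div_natCast]
  omega
end

section
/- For every positive integer m, there exist a positive integer N (namely N = lcm(1,...,m)) and polynomials P_0, ..., P_{N-1} with rational coefficients, each of degree at most m-1, such that for all nonnegative integers n, p_m(n) = P_{n mod N}(n). -/
/-!
Sorting the partitions of `n + (m + 1)` into at most `m + 1` parts by whether they have exactly
`m + 1` parts (then subtract `1` from every part) gives
`p_{m+1}(n + m + 1) = p_m(n + m + 1) + p_{m+1}(n)`. So when `m + 1 ∣ N`, the step-`N` forward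
difference of `p_{m+1}` is a sum of translates of `p_m`, and by induction the `m`-th iterated
step-`N` difference of `p_m` vanishes as soon as `lcm(1, …, m) ∣ N`. Restricted to a residue
class mod `N`, `p_m` therefore has vanishing `m`-th forward difference, so by Newton's forward
difference formula it is a polynomial of degree `< m` there.
-/

namespace Nat.Partition

open Multiset

def cardPartsLeEquiv (n m : ℕ) :
    {p : n.Partition // p.parts.card ≤ m} ≃ {s : Multiset ℕ // card s = m ∧ s.sum = n} where
  toFun p :=
    ⟨p.1.parts + replicate (m - card p.1.parts) 0, by simp [p.2], by simp [p.1.parts_sum]⟩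
  invFun s := ⟨ofSums n s.1 s.2.2, (card_le_card (filter_le _ _)).trans s.2.1.le⟩
  left_inv p := Subtype.ext <| Partition.ext <| by
    simp [filter_add, filter_eq_self.2 fun x hx => (p.1.parts_pos hx).ne', mem_replicate]
  right_inv s := Subtype.ext <| by
    have hzeros : s.1.filter (¬ · ≠ 0) = replicate (Multiset.count 0 s.1) 0 := by
      simp [filter_eq']
    have hcard := congrArg card (filter_add_not (· ≠ 0) s.1)
    rw [hzeros, card_add, card_replicate, s.2.1] at hcard
    conv_rhs => rw [← filter_add_not (· ≠ 0) s.1, hzeros]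
    simp only [ofSums_parts]
    congr 2
    omega

theorem map_sub_one_add_one {n : ℕ} (p : n.Partition) :
    p.parts.map (fun x => x - 1 + 1) = p.parts :=
  (map_congr rfl fun _ hx => Nat.sub_add_cancel (p.parts_pos hx)).trans (map_id' _)

def cardPartsEqEquiv (n m : ℕ) :
    {s : Multiset ℕ // card s = m ∧ s.sum = n} ≃
      {p : (n + m).Partition // p.parts.card = m} where
  toFun s :=
    ⟨⟨s.1.map (· + 1), by simp, by simp [sum_map_add, s.2.1, s.2.2]⟩, by simp [s.2.1]⟩
  invFun p := ⟨p.1.parts.map (· - 1), by simp [p.2], by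
    have := congrArg sum (map_sub_one_add_one p.1)
    rw [sum_map_add, p.1.parts_sum] at this
    simpa only [map_const', p.2, sum_replicate, smul_eq_mul, mul_one,
      Nat.add_right_cancel_iff] using this⟩
  left_inv s := Subtype.ext <| by simp [map_map]
  right_inv p := Subtype.ext <| Partition.ext <| by simpa [map_map] using map_sub_one_add_one p.1

end Nat.Partition

theorem pParts_succ_add (m n : ℕ) :
    pParts (m + 1) (n + (m + 1)) = pParts m (n + (m + 1)) + pParts (m + 1) n := by
  have hsplit : ∀ p : (n + (m + 1)).Partition,
      p.parts.card ≤ m + 1 ↔ p.parts.card ≤ m ∨ p.parts.card = m + 1 := fun p => by omega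
  rw [pParts, Fintype.card_congr (Equiv.subtypeEquivRight hsplit),
    Fintype.card_subtype_or_disjoint _ _ fun _ h₁ h₂ p hp => by
      have := h₁ p hp; have := h₂ p hp; omega]
  rw [pParts, pParts, Fintype.card_congr ((Nat.Partition.cardPartsEqEquiv n (m + 1)).symm.trans
    (Nat.Partition.cardPartsLeEquiv n (m + 1)).symm)]

theorem pParts_zero_succ (n : ℕ) : pParts 0 (n + 1) = 0 := by
  rw [pParts, Fintype.card_eq_zero_iff]
  refine ⟨fun ⟨p, hp⟩ => ?_⟩
  have hsum := p.parts_sum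
  rw [Multiset.card_eq_zero.1 (Nat.le_zero.1 hp), Multiset.sum_zero] at hsum
  omega

open Polynomial Finset fwdDiff

section fwdDiff

variable {M M' G : Type*} [AddCommMonoid M] [AddCommMonoid M'] [AddCommGroup G]

theorem fwdDiff_iter_comp_addMonoidHom (φ : M →+ M') (f : M' → G) (h : M) (n : ℕ) :
    (Δ_[h])^[n] (f ∘ φ) = ((Δ_[φ h])^[n] f) ∘ φ := by
  funext y
  simp [fwdDiff_iter_eq_sum_shift, map_nsmul]

theorem fwdDiff_nsmul_eq_sum (f : M → G) (k : ℕ) (h y : M) :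
    Δ_[k • h] f y = ∑ t ∈ range k, Δ_[h] f (y + t • h) := by
  simp only [fwdDiff, add_assoc, ← succ_nsmul]
  simpa using (sum_range_sub (fun t => f (y + t • h)) k).symm

theorem fwdDiff_iter_eq_zero_of_le {f : M → G} {h : M} {d k : ℕ} (hf : (Δ_[h])^[d] f = 0)
    (hk : d ≤ k) : (Δ_[h])^[k] f = 0 := by
  obtain ⟨j, rfl⟩ := Nat.exists_eq_add_of_le hk
  rw [add_comm, Function.iterate_add_apply, hf]
  exact Function.iterate_fixed (by funext; simp [fwdDiff]) j

end fwdDiff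

section Newton

variable {K : Type*} [Field K] [CharZero K]

theorem exists_natDegree_le_eval_eq_of_fwdDiff_iter_eq_zero {f : ℕ → K} {d : ℕ}
    (hf : (Δ_[1])^[d + 1] f = 0) :
    ∃ Q : K[X], Q.natDegree ≤ d ∧ ∀ q : ℕ, f q = Q.eval (q : K) := by
  refine ⟨∑ k ∈ range (d + 1), C ((Δ_[1])^[k] f 0 / k.factorial) * descPochhammer K k, ?_,
    fun q => ?_⟩
  · refine natDegree_sum_le_of_forall_le _ _ fun k hk => (natDegree_C_mul_le _ _).trans ?_
    simpa [Nat.lt_succ_iff] using hk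
  set g : ℕ → K := fun k => q.choose k • (Δ_[1])^[k] f 0
  have hg : ∀ k, min q d < k → g k = 0 := by
    intro k hk
    rcases min_lt_iff.1 hk with hq | hd
    · simp [g, Nat.choose_eq_zero_of_lt hq]
    · simp [g, fwdDiff_iter_eq_zero_of_le hf hd]
  have hsum : ∀ e, min q d ≤ e →
      ∑ k ∈ range (e + 1), g k = ∑ k ∈ range (min q d + 1), g k := fun e he =>
    (sum_subset (range_subset_range.2 (by omega)) fun k _ hk =>
      hg k (by simp only [mem_range] at hk; omega)).symm
  calc f q = f (0 + q • 1) := by simp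
    _ = ∑ k ∈ range (q + 1), g k := shift_eq_sum_fwdDiff_iter 1 f q 0
    _ = ∑ k ∈ range (d + 1), g k := by rw [hsum q (min_le_left q d), hsum d (min_le_right q d)]
    _ = _ := by
      simp only [eval_finsetSum, eval_mul, eval_C, g, nsmul_eq_mul,
        Nat.cast_choose_eq_descPochhammer_div]
      exact sum_congr rfl fun k _ => by ring

theorem exists_quasipoly_of_fwdDiff_iter_eq_zero {f : ℕ → K} {N d : ℕ} (hN : 0 < N)
    (hf : (Δ_[N])^[d + 1] f = 0) :
    ∃ P : ℕ → K[X], (∀ i, (P i).natDegree ≤ d) ∧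
      ∀ n : ℕ, f n = (P (n % N)).eval (n : K) := by
  have hres : ∀ r, ∃ Q : K[X], Q.natDegree ≤ d ∧
      ∀ q : ℕ, f (q * N + r) = Q.eval (q : K) := by
    intro r
    apply exists_natDegree_le_eval_eq_of_fwdDiff_iter_eq_zero
    change (Δ_[1])^[d + 1] ((fun x => f (x + r)) ∘ AddMonoidHom.mulRight N) = 0
    rw [fwdDiff_iter_comp_addMonoidHom, AddMonoidHom.mulRight_apply, one_mul]
    ext q
    rw [Function.comp_apply, fwdDiff_iter_comp_add, hf, Pi.zero_apply, Pi.zero_apply]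
  choose Q hQdeg hQ using hres
  refine ⟨fun r => (Q r).comp (C (N : K)⁻¹ * (X - C (r : K))), fun r => ?_, fun n => ?_⟩
  · refine natDegree_comp_le.trans ?_
    calc (Q r).natDegree * (C (N : K)⁻¹ * (X - C (r : K))).natDegree ≤ d * 1 :=
          Nat.mul_le_mul (hQdeg r) ((natDegree_C_mul_le _ _).trans (natDegree_X_sub_C_le _))
      _ = d := mul_one d
  · have hdiv : (n : K) = (n / N : ℕ) * N + (n % N : ℕ) := by
      exact_mod_cast (Nat.div_add_mod' n N).symm
    have hq : (C (N : K)⁻¹ * (X - C ((n % N : ℕ) : K))).eval (n : K) =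
        ((n / N : ℕ) : K) := by
      rw [eval_mul, eval_C, eval_sub, eval_X, eval_C, hdiv, add_sub_cancel_right]
      have hN' : (N : K) ≠ 0 := by exact_mod_cast hN.ne'
      field_simp
    rw [eval_comp, hq, ← hQ, Nat.div_add_mod']

end Newton

theorem fwdDiff_pParts_succ (m : ℕ) :
    Δ_[m + 1] (fun n => (pParts (m + 1) n : ℚ)) = fun n => (pParts m (n + (m + 1)) : ℚ) := by
  ext n
  simp only [fwdDiff, pParts_succ_add, Nat.cast_add, add_sub_cancel_right]

theorem fwdDiff_iter_pParts_succ {m N : ℕ} (hN : m + 1 ∣ N) (j y : ℕ) :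
    (Δ_[N])^[j + 1] (fun n => (pParts (m + 1) n : ℚ)) y =
      ∑ t ∈ range (N / (m + 1)),
        (Δ_[N])^[j] (fun n => (pParts m n : ℚ)) (y + (t + 1) * (m + 1)) := by
  obtain ⟨k, rfl⟩ := hN
  have hstep : Δ_[(m + 1) * k] (fun n => (pParts (m + 1) n : ℚ)) =
      ∑ t ∈ range k, fun n => (pParts m (n + (t + 1) * (m + 1)) : ℚ) := by
    ext y
    rw [mul_comm, ← smul_eq_mul, fwdDiff_nsmul_eq_sum, fwdDiff_pParts_succ, Finset.sum_apply]
    simp [add_assoc, add_mul]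
  rw [Function.iterate_succ_apply, hstep, fwdDiff_iter_finsetSum, Finset.sum_apply,
    Nat.mul_div_cancel_left _ m.succ_pos]
  exact sum_congr rfl fun t _ => fwdDiff_iter_comp_add _ (fun n => (pParts m n : ℚ)) _ _ _

theorem fwdDiff_iter_pParts_succ_eq_zero (m N : ℕ) (hN : ∀ k ∈ Icc 1 (m + 1), k ∣ N) :
    (Δ_[N])^[m + 1] (fun n => (pParts (m + 1) n : ℚ)) = 0 := by
  induction m with
  | zero =>
    ext y
    rw [fwdDiff_iter_pParts_succ (one_dvd N), Pi.zero_apply]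
    exact sum_eq_zero fun t _ => by simp [← add_assoc, pParts_zero_succ]
  | succ m ih =>
    ext y
    rw [fwdDiff_iter_pParts_succ (hN (m + 2) (by simp)),
      ih fun k hk => hN k (Icc_subset_Icc_right (by omega) hk)]
    simp

theorem pParts_quasipolynomial (m : ℕ) (hm : 0 < m) :
    ∃ P : ℕ → Polynomial ℚ,
      (∀ i < (Finset.Icc 1 m).lcm id, (P i).natDegree ≤ m - 1) ∧
      ∀ n : ℕ, (pParts m n : ℚ) = (P (n % (Finset.Icc 1 m).lcm id)).eval (n : ℚ) := by
  obtain ⟨m, rfl⟩ := Nat.exists_eq_add_one_of_ne_zero hm.ne'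
  have hpos : 0 < (Icc 1 (m + 1)).lcm id :=
    Nat.pos_of_ne_zero fun h => by simpa using Finset.lcm_eq_zero_iff.1 h
  obtain ⟨P, hdeg, hP⟩ := exists_quasipoly_of_fwdDiff_iter_eq_zero hpos
    (fwdDiff_iter_pParts_succ_eq_zero m _ fun k hk => dvd_lcm hk)
  exact ⟨P, fun i _ => hdeg i, hP⟩
end

section
/- For every finite nonempty set S of positive integers, there exists a positive integer N (namely N = lcm of the elements of S) and polynomials P_0, ..., P_{N-1} with rational coefficients such that p_S(n) = P_{n mod N}(n) for all nonnegative integers n; moreover each P_i has degree at most |S| - 1. -/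
/-- `pS S n` is the number of partitions of `n` with all parts in `S`. -/
def pS (S : Finset ℕ) (n : ℕ) : ℕ :=
  Fintype.card {p : n.Partition // ∀ x ∈ p.parts, x ∈ S}

/-!
Removing one part `s` from the partitions that contain it gives
`p_S (n + s) = p_S n + p_{S \ {s}} (n + s)`. Hence, for `s ∣ L`, the forward difference of `p_S`
with step `L` is a sum of shifts of `p_{S \ {s}}`, and by induction on `S` the `|S|`-th
forward difference with step `L = lcm S` vanishes. By the Gregory–Newton formula, a function whose
`(d + 1)`-th forward difference with step `L` vanishes is, on each residue class `r + L t`, a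
polynomial of degree `≤ d` in `t = (n - r) / L`, hence in `n`.
-/

open Finset Polynomial fwdDiff
open scoped Nat

lemma fwdDiff_iter_comp_mul_add {G : Type*} [AddCommGroup G] (f : ℕ → G) (r M k t : ℕ) :
    (Δ_[1])^[k] (fun t ↦ f (r + M * t)) t = (Δ_[M])^[k] f (r + M * t) := by
  simp [fwdDiff_iter_eq_sum_shift, mul_add, add_assoc, mul_comm]

section Newton

variable {K : Type*} [Field K] [CharZero K]

lemma exists_polynomial_of_fwdDiff_iter_eq_zero {f : ℕ → K} {d : ℕ}
    (hf : (Δ_[1])^[d + 1] f = 0) :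
    ∃ Q : K[X], Q.natDegree ≤ d ∧ ∀ t : ℕ, f t = Q.eval (t : K) := by
  refine ⟨∑ k ∈ range (d + 1), C ((Δ_[1])^[k] f 0 / k !) * descPochhammer K k, ?_, fun t ↦ ?_⟩
  · refine natDegree_sum_le_of_forall_le _ _ fun k hk ↦ (natDegree_C_mul_le _ _).trans ?_
    rw [descPochhammer_natDegree]
    exact Nat.lt_succ_iff.mp (mem_range.mp hk)
  have hvanish (k : ℕ) (hk : d + 1 ≤ k) : (Δ_[1])^[k] f = 0 := by
    rw [← Nat.sub_add_cancel hk, Function.iterate_add_apply, hf]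
    exact Function.iterate_fixed (_root_.funext fun _ ↦ sub_self (0 : K)) _
  calc f t = ∑ k ∈ range (t + 1), t.choose k • (Δ_[1])^[k] f 0 := by
        simpa using shift_eq_sum_fwdDiff_iter 1 f t 0
    _ = ∑ k ∈ range (t + 1 + (d + 1)), t.choose k • (Δ_[1])^[k] f 0 :=
        sum_subset (range_subset_range.2 (by omega)) fun k _ hk ↦ by
          rw [Nat.choose_eq_zero_of_lt (by simpa using hk), zero_smul]
    _ = ∑ k ∈ range (d + 1), t.choose k • (Δ_[1])^[k] f 0 :=
        (sum_subset (range_subset_range.2 (by omega)) fun k _ hk ↦ by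
          rw [hvanish k (by simpa using hk), Pi.zero_apply, smul_zero]).symm
    _ = _ := by
        rw [eval_finsetSum]
        refine sum_congr rfl fun k _ ↦ ?_
        rw [eval_mul, eval_C, descPochhammer_eval_eq_descFactorial,
          Nat.descFactorial_eq_factorial_mul_choose, nsmul_eq_mul]
        have hk : (k ! : K) ≠ 0 := Nat.cast_ne_zero.2 k.factorial_ne_zero
        push_cast
        field_simp

lemma exists_quasipolynomial_of_fwdDiff_iter_eq_zero {f : ℕ → K} {M d : ℕ} (hM : 0 < M)
    (hf : (Δ_[M])^[d + 1] f = 0) :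
    ∃ P : ℕ → K[X], (∀ r, (P r).natDegree ≤ d) ∧ ∀ n, f n = (P (n % M)).eval (n : K) := by
  have residue (r : ℕ) : ∃ Q : K[X], Q.natDegree ≤ d ∧ ∀ t : ℕ, f (r + M * t) = Q.eval (t : K) :=
    exists_polynomial_of_fwdDiff_iter_eq_zero <| funext fun t ↦ by
      rw [fwdDiff_iter_comp_mul_add, hf]; rfl
  choose Q hQdeg hQ using residue
  refine ⟨fun r ↦ (Q r).comp (C (M : K)⁻¹ * (X - C (r : K))), fun r ↦ ?_, fun n ↦ ?_⟩
  · have hlin : (C (M : K)⁻¹ * (X - C (r : K))).natDegree ≤ 1 :=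
      (natDegree_C_mul_le _ _).trans (natDegree_X_sub_C_le _)
    calc _ ≤ (Q r).natDegree * 1 := natDegree_comp_le.trans (Nat.mul_le_mul_left _ hlin)
      _ ≤ d := by simpa using hQdeg r
  · have hn : (n : K) = (n % M : ℕ) + M * (n / M : ℕ) := by
      exact_mod_cast (Nat.mod_add_div n M).symm
    conv_lhs => rw [← Nat.mod_add_div n M]
    rw [hQ, eval_comp, eval_mul, eval_C, eval_sub, eval_X, eval_C, hn, add_sub_cancel_left,
      inv_mul_cancel_left₀ (Nat.cast_ne_zero.2 hM.ne')]

end Newton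

lemma pS_empty_of_pos {n : ℕ} (hn : 0 < n) : pS ∅ n = 0 := by
  rw [pS, Fintype.card_eq_zero_iff]
  refine ⟨fun ⟨p, hp⟩ ↦ ?_⟩
  obtain ⟨x, hx⟩ := Multiset.exists_mem_of_ne_zero fun h0 : p.parts = 0 ↦ by
    simpa [h0, hn.ne] using p.parts_sum
  simpa using hp x hx

lemma pS_add (S : Finset ℕ) {s : ℕ} (hs : s ∈ S) (hs0 : 0 < s) (n : ℕ) :
    pS S (n + s) = pS (S.erase s) (n + s) + pS S n := by
  classical
  have withoutPart : Fintype.card {p : (n + s).Partition // (∀ x ∈ p.parts, x ∈ S) ∧ s ∉ p.parts}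
      = pS (S.erase s) (n + s) :=
    Fintype.card_congr <| Equiv.subtypeEquivRight fun p ↦ by
      simp only [mem_erase]
      exact ⟨fun h x hx ↦ ⟨fun hxs ↦ h.2 (hxs ▸ hx), h.1 x hx⟩,
        fun h ↦ ⟨fun x hx ↦ (h x hx).2, fun hsp ↦ (h s hsp).1 rfl⟩⟩
  have withPart : Fintype.card {p : (n + s).Partition // (∀ x ∈ p.parts, x ∈ S) ∧ s ∈ p.parts}
      = pS S (n + s - s) := by
    let e := Nat.Partition.partitionWithPartEquiv hs0 (Nat.le_add_left s n)
    refine Fintype.card_congr <| (Equiv.subtypeEquivRight fun _ ↦ and_comm).trans <|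
      (Equiv.subtypeSubtypeEquivSubtypeInter _ _).symm.trans
      (Equiv.subtypeEquiv e.symm fun q ↦ ?_).symm
    simp [e, hs]
  rw [Nat.add_sub_cancel] at withPart
  rw [← withoutPart, ← withPart, pS, Fintype.card_subtype, Fintype.card_subtype,
    Fintype.card_subtype, ← card_filter_add_card_filter_not (fun p ↦ s ∈ p.parts), filter_filter,
    filter_filter, add_comm]

lemma pS_add_mul (R : Type*) [AddCommMonoidWithOne R] (S : Finset ℕ) {s : ℕ} (hs : s ∈ S)
    (hs0 : 0 < s) (n m : ℕ) :
    (pS S (n + m * s) : R) = pS S n + ∑ j ∈ range m, (pS (S.erase s) (n + (j + 1) * s) : R) := by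
  induction m with
  | zero => simp
  | succ m ih =>
    rw [sum_range_succ, ← add_assoc, ← ih, add_one_mul, ← add_assoc, pS_add S hs hs0,
      Nat.cast_add, add_comm]

section FwdDiff

variable {R : Type*} [AddCommGroupWithOne R]

lemma fwdDiff_pS {S : Finset ℕ} {s M : ℕ} (hs : s ∈ S) (hs0 : 0 < s) (hsM : s ∣ M) :
    Δ_[M] (fun n ↦ (pS S n : R)) =
      ∑ j ∈ range (M / s), fun n ↦ (pS (S.erase s) (n + (j + 1) * s) : R) := by
  obtain ⟨m, rfl⟩ := hsM
  ext n
  rw [fwdDiff, Finset.sum_apply, Nat.mul_div_cancel_left m hs0, mul_comm, pS_add_mul R S hs hs0,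
    add_sub_cancel_left]

lemma fwdDiff_iter_card_pS_eq_zero {S : Finset ℕ} (hS : S.Nonempty) (hpos : ∀ s ∈ S, 0 < s)
    {M : ℕ} (hM : S.lcm id ∣ M) : (Δ_[M])^[#S] (fun n ↦ (pS S n : R)) = 0 := by
  induction hS using Finset.Nonempty.cons_induction with
  | singleton a =>
    have ha : 0 < a := hpos a (mem_singleton_self a)
    rw [card_singleton, Function.iterate_one,
      fwdDiff_pS (mem_singleton_self a) ha (by simpa using hM)]
    refine sum_eq_zero fun j _ ↦ funext fun n ↦ ?_
    simp [pS_empty_of_pos (n := n + (j + 1) * a) (by positivity)]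
  | cons a T ha hT ih =>
    have ha0 : 0 < a := hpos a (mem_cons_self a T)
    rw [cons_eq_insert, lcm_insert, _root_.lcm_dvd_iff] at hM
    rw [card_cons, Function.iterate_succ_apply, fwdDiff_pS (mem_cons_self a T) ha0 hM.1,
      erase_cons, fwdDiff_iter_finsetSum]
    refine sum_eq_zero fun j _ ↦ funext fun n ↦ ?_
    rw [fwdDiff_iter_comp_add M (fun n ↦ (pS T n : R)),
      ih (fun s hs ↦ hpos s (mem_cons_of_mem hs)) hM.2]
    rfl

end FwdDiff

theorem pS_quasipolynomial (S : Finset ℕ) (hS : S.Nonempty) (hpos : ∀ s ∈ S, 0 < s) :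
    ∃ P : ℕ → Polynomial ℚ,
      (∀ i < S.lcm id, (P i).natDegree ≤ S.card - 1) ∧
      ∀ n : ℕ, (pS S n : ℚ) = (P (n % S.lcm id)).eval (n : ℚ) := by
  have hL : 0 < S.lcm id := Nat.pos_of_ne_zero <| lcm_ne_zero_iff.2 fun s hs ↦ (hpos s hs).ne'
  have hvanish : (Δ_[S.lcm id])^[S.card - 1 + 1] (fun n ↦ (pS S n : ℚ)) = 0 := by
    rw [Nat.sub_add_cancel hS.card_pos]
    exact fwdDiff_iter_card_pS_eq_zero hS hpos dvd_rfl
  obtain ⟨P, hdeg, hP⟩ := exists_quasipolynomial_of_fwdDiff_iter_eq_zero hL hvanish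
  exact ⟨P, fun i _ ↦ hdeg i, hP⟩
end

section
/- For S = {1, 5, 10, 25}, the function p_S(n) (the number of ways to make change for n cents using pennies, nickels, dimes, and quarters) satisfies p_S(n) ~ n^3/7500 as n → ∞; precisely, the limit of p_S(n)/n^3 as n → ∞ equals 1/7500. -/
open Finset Filter Topology
open scoped Nat

open Asymptotics in
theorem tendsto_choose_add_div_pow (c k : ℕ) :
    Tendsto (fun n : ℕ => ((n + c).choose k : ℝ) / n ^ k) atTop (𝓝 (1 / k !)) := by
  have hshift : (fun n : ℕ => ((n + c : ℕ) : ℝ)) ~[atTop] fun n => (n : ℝ) := by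
    push_cast
    exact IsEquivalent.refl.add_isLittleO
      ((isLittleO_const_id_atTop (c : ℝ)).comp_tendsto tendsto_natCast_atTop_atTop)
  have hchoose : (fun n : ℕ => ((n + c).choose k : ℝ)) ~[atTop] fun n => (n : ℝ) ^ k / k ! :=
    ((isEquivalent_choose k).comp_tendsto (tendsto_add_atTop_nat c)).trans
      ((hshift.pow k).div IsEquivalent.refl)
  refine (hchoose.div (IsEquivalent.refl (u := fun n : ℕ => (n : ℝ) ^ k))).symm.tendsto_nhds ?_
  refine tendsto_const_nhds.congr' ?_
  filter_upwards [eventually_ne_atTop 0] with n hn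
  simp only [Pi.div_apply]
  field_simp

section WeightedSimplex

variable {ι : Type*} [Fintype ι] [DecidableEq ι]

/-- The box `x i ≤ n` only makes the set finite: for positive weights it is implied by the
weighted inequality (`mem_weightedSimplex`). -/
def weightedSimplex (w : ι → ℕ) (n : ℕ) : Finset (ι → ℕ) :=
  {x ∈ Fintype.piFinset fun _ => range (n + 1) | ∑ i, w i * x i ≤ n}

variable {w : ι → ℕ}

theorem mem_weightedSimplex {n : ℕ} {x : ι → ℕ} (hw : ∀ i, 0 < w i) :
    x ∈ weightedSimplex w n ↔ ∑ i, w i * x i ≤ n := by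
  refine ⟨fun h => (mem_filter.1 h).2, fun h => mem_filter.2 ⟨?_, h⟩⟩
  refine Fintype.mem_piFinset.2 fun i => mem_range_succ_iff.2 ?_
  calc x i ≤ w i * x i := Nat.le_mul_of_pos_left _ (hw i)
    _ ≤ ∑ j, w j * x j := single_le_sum (fun j _ => Nat.zero_le (w j * x j)) (mem_univ i)
    _ ≤ n := h

theorem mem_weightedSimplex_one {n : ℕ} {x : ι → ℕ} :
    x ∈ weightedSimplex 1 n ↔ ∑ i, x i ≤ n := by
  simp [mem_weightedSimplex (w := 1) fun _ => Nat.one_pos]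

theorem card_weightedSimplex_one (n : ℕ) :
    #(weightedSimplex (1 : ι → ℕ) n) = (n + Fintype.card ι).choose (Fintype.card ι) := by
  have hcard : #((univ : Finset (Option ι)).finsuppAntidiag n) =
      (n + Fintype.card ι).choose (Fintype.card ι) := by
    rw [card_finsuppAntidiag_nat_eq_choose, Finset.card_univ, Fintype.card_option,
      show Fintype.card ι + 1 + n - 1 = Fintype.card ι + n by omega, add_comm,
      Nat.choose_symm_add]
  rw [← hcard]
  -- the slack coordinate `none` turns `∑ x ≤ n` into `∑ x = n`
  refine card_nbij' (fun x => Finsupp.equivFunOnFinite.symm fun o => o.elim (n - ∑ i, x i) x)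
    (fun f i => f (some i)) ?_ ?_ ?_ ?_
  · intro x hx
    rw [mem_coe, mem_weightedSimplex_one] at hx
    simp [Fintype.sum_option, hx]
  · intro f hf
    rw [mem_coe, mem_finsuppAntidiag, Fintype.sum_option] at hf
    simp only [mem_coe, mem_weightedSimplex_one]
    omega
  · intro x _
    simp
  · intro f hf
    rw [mem_coe, mem_finsuppAntidiag, Fintype.sum_option] at hf
    ext (_ | i) <;> simp
    omega

theorem card_piFinset_range (w : ι → ℕ) :
    #(Fintype.piFinset fun i => range (w i)) = ∏ i, w i := by
  simp

theorem card_weightedSimplex_one_le (hw : ∀ i, 0 < w i) (n : ℕ) :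
    #(weightedSimplex (1 : ι → ℕ) n) ≤ (∏ i, w i) * #(weightedSimplex w n) := by
  rw [← card_piFinset_range, mul_comm, ← card_product]
  refine card_le_card_of_injOn (fun x => (fun i => x i / w i, fun i => x i % w i)) ?_ ?_
  · intro x hx
    rw [mem_coe, mem_weightedSimplex_one] at hx
    simp only [coe_product, Set.mem_prod, mem_coe, mem_weightedSimplex hw,
      Fintype.mem_piFinset, mem_range]
    refine ⟨?_, fun i => Nat.mod_lt _ (hw i)⟩
    calc ∑ i, w i * (x i / w i) ≤ ∑ i, x i := sum_le_sum fun i _ => Nat.mul_div_le _ _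
      _ ≤ n := hx
  · intro x _ y _ hxy
    simp only [Prod.mk.injEq, funext_iff] at hxy
    funext i
    rw [← Nat.div_add_mod (x i) (w i), ← Nat.div_add_mod (y i) (w i), hxy.1, hxy.2]

theorem le_card_weightedSimplex_one (hw : ∀ i, 0 < w i) (n : ℕ) :
    (∏ i, w i) * #(weightedSimplex w n) ≤
      #(weightedSimplex (1 : ι → ℕ) (n + ∑ i, (w i - 1))) := by
  rw [← card_piFinset_range, mul_comm, ← card_product]
  refine card_le_card_of_injOn (fun qr i => w i * qr.1 i + qr.2 i) ?_ ?_
  · rintro ⟨q, r⟩ hqr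
    simp only [coe_product, Set.mem_prod, mem_coe, mem_weightedSimplex hw,
      Fintype.mem_piFinset, mem_range] at hqr
    simp only [mem_coe, mem_weightedSimplex_one, sum_add_distrib]
    have : ∑ i, r i ≤ ∑ i, (w i - 1) := sum_le_sum fun i _ => Nat.le_sub_one_of_lt (hqr.2 i)
    omega
  · rintro ⟨q, r⟩ hqr ⟨q', r'⟩ hqr' h
    simp only [coe_product, Set.mem_prod, mem_coe, Fintype.mem_piFinset, mem_range] at hqr hqr'
    simp only [funext_iff] at h
    have hq : ∀ i, q i = q' i := fun i => by
      have := congrArg (· / w i) (h i)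
      simpa [Nat.mul_add_div (hw i), Nat.div_eq_of_lt (hqr.2 i), Nat.div_eq_of_lt (hqr'.2 i)]
        using this
    have hr : ∀ i, r i = r' i := fun i => by
      have := h i
      rw [hq i] at this
      omega
    simp [funext hq, funext hr]

theorem tendsto_card_weightedSimplex_div_pow (hw : ∀ i, 0 < w i) :
    Tendsto (fun n => (#(weightedSimplex w n) : ℝ) / n ^ Fintype.card ι) atTop
      (𝓝 (1 / ((Fintype.card ι) ! * ∏ i, w i))) := by
  set k := Fintype.card ι
  have hP : (0 : ℝ) < (∏ i, w i : ℕ) := Nat.cast_pos.2 (prod_pos fun i _ => hw i)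
  have hlim : ∀ c, Tendsto (fun n : ℕ => ((n + c).choose k : ℝ) / n ^ k / (∏ i, w i : ℕ))
      atTop (𝓝 (1 / (k ! * ∏ i, w i))) := fun c => by
    simpa only [div_div] using (tendsto_choose_add_div_pow c k).div_const ((∏ i, w i : ℕ) : ℝ)
  refine tendsto_of_tendsto_of_tendsto_of_le_of_le (hlim k) (hlim (∑ i, (w i - 1) + k))
    (fun n => ?_) (fun n => ?_)
  · rw [div_right_comm]
    refine div_le_div_of_nonneg_right ((div_le_iff₀ hP).2 ?_) (by positivity)
    have := card_weightedSimplex_one_le hw n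
    rw [card_weightedSimplex_one, mul_comm] at this
    exact_mod_cast this
  · rw [div_right_comm]
    refine div_le_div_of_nonneg_right ((le_div_iff₀ hP).2 ?_) (by positivity)
    have := le_card_weightedSimplex_one hw n
    rw [card_weightedSimplex_one, add_assoc, mul_comm] at this
    exact_mod_cast this

end WeightedSimplex

section PartsInFinset

variable {S : Finset ℕ}

theorem Multiset.sum_eq_count_one_add {m : Multiset ℕ} (h1 : 1 ∈ S)
    (hm : ∀ x ∈ m, x ∈ S) :
    m.sum = m.count 1 + ∑ s : S.erase 1, (s : ℕ) * m.count (s : ℕ) := by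
  rw [sum_multiset_count_of_subset m S fun x hx => hm x (Multiset.mem_toFinset.1 hx),
    ← add_sum_erase S _ h1, sum_coe_sort (S.erase 1) fun s => s * m.count s]
  simp only [smul_eq_mul, mul_comm, one_mul]

def partsOfMultiplicities (n : ℕ) (x : S.erase 1 → ℕ) : Multiset ℕ :=
  Multiset.replicate (n - ∑ s : S.erase 1, (s : ℕ) * x s) 1 +
    ∑ s : S.erase 1, Multiset.replicate (x s) (s : ℕ)

theorem count_partsOfMultiplicities (n : ℕ) (x : S.erase 1 → ℕ) (s : S.erase 1) :
    (partsOfMultiplicities n x).count (s : ℕ) = x s := by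
  have hs1 : (s : ℕ) ≠ 1 := (mem_erase.1 s.2).1
  simp [partsOfMultiplicities, Multiset.count_sum', Multiset.count_replicate, hs1.symm]

theorem count_one_partsOfMultiplicities (n : ℕ) (x : S.erase 1 → ℕ) :
    (partsOfMultiplicities n x).count 1 = n - ∑ s : S.erase 1, (s : ℕ) * x s := by
  have hs1 : ∀ s : S.erase 1, (s : ℕ) ≠ 1 := fun s => (mem_erase.1 s.2).1
  simp [partsOfMultiplicities, Multiset.count_sum', Multiset.count_replicate, hs1]

theorem mem_of_mem_partsOfMultiplicities (h1 : 1 ∈ S) {n : ℕ} {x : S.erase 1 → ℕ} {t : ℕ}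
    (ht : t ∈ partsOfMultiplicities n x) : t ∈ S := by
  simp only [partsOfMultiplicities, Multiset.mem_add, Multiset.mem_sum, mem_univ, true_and] at ht
  rcases ht with ht | ⟨s, ht⟩
  · rw [Multiset.eq_of_mem_replicate ht]; exact h1
  · rw [Multiset.eq_of_mem_replicate ht]; exact mem_of_mem_erase s.2

theorem sum_partsOfMultiplicities {n : ℕ} {x : S.erase 1 → ℕ}
    (hx : ∑ s : S.erase 1, (s : ℕ) * x s ≤ n) : (partsOfMultiplicities n x).sum = n := by
  simp only [partsOfMultiplicities, Multiset.sum_add, Multiset.sum_sum, Multiset.sum_replicate,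
    smul_eq_mul, mul_one, mul_comm (x _)]
  omega

theorem pos_of_mem_erase_one (h0 : 0 ∉ S) (s : S.erase 1) : 0 < (s : ℕ) :=
  Nat.pos_of_ne_zero fun hs => h0 (hs ▸ mem_of_mem_erase s.2)

def partitionEquivWeightedSimplex (h0 : 0 ∉ S) (h1 : 1 ∈ S) (n : ℕ) :
    {p : n.Partition // ∀ x ∈ p.parts, x ∈ S} ≃
      weightedSimplex (fun s : S.erase 1 => (s : ℕ)) n where
  toFun p := ⟨fun s => p.1.parts.count (s : ℕ), by
    rw [mem_weightedSimplex (pos_of_mem_erase_one h0)]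
    have := Multiset.sum_eq_count_one_add h1 p.2
    rw [p.1.parts_sum] at this
    omega⟩
  invFun x :=
    have hx := (mem_weightedSimplex (pos_of_mem_erase_one h0)).1 x.2
    ⟨⟨partsOfMultiplicities n x, fun ht => Nat.pos_of_ne_zero fun h => h0
        (h ▸ mem_of_mem_partsOfMultiplicities h1 ht), sum_partsOfMultiplicities hx⟩,
      fun _ => mem_of_mem_partsOfMultiplicities h1⟩
  left_inv p := by
    obtain ⟨p, hp⟩ := p
    refine Subtype.ext (Nat.Partition.ext (Multiset.ext.2 fun t => ?_))
    dsimp only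
    by_cases ht1 : t = 1
    · subst ht1
      have := Multiset.sum_eq_count_one_add h1 hp
      rw [p.parts_sum] at this
      rw [count_one_partsOfMultiplicities]
      omega
    by_cases htS : t ∈ S
    · exact count_partsOfMultiplicities n _ ⟨t, mem_erase.2 ⟨ht1, htS⟩⟩
    · rw [Multiset.count_eq_zero.2 fun h => htS (hp t h),
        Multiset.count_eq_zero.2 fun h => htS (mem_of_mem_partsOfMultiplicities h1 h)]
  right_inv x := Subtype.ext <| funext <| count_partsOfMultiplicities n x.1

theorem pS_eq_card_weightedSimplex (h0 : 0 ∉ S) (h1 : 1 ∈ S) (n : ℕ) :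
    pS S n = #(weightedSimplex (fun s : S.erase 1 => (s : ℕ)) n) := by
  rw [pS, Fintype.card_congr (partitionEquivWeightedSimplex h0 h1 n), Fintype.card_coe]

theorem tendsto_pS_div_pow (h0 : 0 ∉ S) (h1 : 1 ∈ S) :
    Tendsto (fun n => (pS S n : ℝ) / n ^ (#S - 1)) atTop
      (𝓝 (1 / ((#S - 1) ! * ∏ s ∈ S, s))) := by
  have hcard : Fintype.card (S.erase 1) = #S - 1 := by
    rw [Fintype.card_coe, card_erase_of_mem h1]
  have hprod : ∏ s : S.erase 1, (s : ℕ) = ∏ s ∈ S, s := by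
    rw [prod_coe_sort (S.erase 1) fun s => s, prod_erase S (f := fun s => s) rfl]
  simp_rw [pS_eq_card_weightedSimplex h0 h1]
  simpa only [hcard, hprod] using tendsto_card_weightedSimplex_div_pow (pos_of_mem_erase_one h0)

end PartsInFinset

open Filter in
theorem coin_change_asymptotic :
    Tendsto (fun n : ℕ => (pS {1, 5, 10, 25} n : ℝ) / (n : ℝ) ^ 3) atTop
      (nhds (1 / 7500)) := by
  have h := tendsto_pS_div_pow (S := {1, 5, 10, 25}) (by decide) (by decide)
  norm_num at h
  exact h
end

section
/- For every positive integer m, the limit as n → ∞ of p_m(n)/n^{m-1} equals 1/(m!·(m-1)!). -/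
/-!
Pad a partition of `n` into at most `m` parts with zeros and sort it: `p_m(n)` counts the
monotone `m`-tuples of naturals with sum `n`. Sorting writes every `m`-tuple with sum `n` as a
monotone one composed with a permutation, so the `C(n+m-1, m-1)` such tuples number at most
`m! p_m(n)`. Conversely, adding the staircase `(0, 1, …, m-1)` to a monotone tuple makes it
strictly monotone, so its `m!` rearrangements are distinct tuples with sum `n + m(m-1)/2`, and
`m! p_m(n) ≤ C(n + m(m-1)/2 + m-1, m-1)`. Both binomials are `n^(m-1)/(m-1)! + O(n^(m-2))`.
-/

open Filter Topology Multiset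

section StarsAndBars

variable {α : Type*} [Fintype α]

instance finite_subtype_sum_eq (n : ℕ) : Finite {P : α → ℕ // ∑ i, P i = n} := by
  classical exact Finite.of_equiv _ (Sym.equivNatSumOfFintype α n)

theorem card_subtype_sum_eq (n : ℕ) :
    Nat.card {P : α → ℕ // ∑ i, P i = n} = (Fintype.card α + n - 1).choose n := by
  classical
  rw [← Nat.card_congr (Sym.equivNatSumOfFintype α n), Nat.card_eq_fintype_card,
    Sym.card_sym_eq_choose]

theorem card_fin_succ_subtype_sum_eq (k n : ℕ) :
    Nat.card {x : Fin (k + 1) → ℕ // ∑ i, x i = n} = (n + k).choose k := by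
  rw [card_subtype_sum_eq, Fintype.card_fin, show k + 1 + n - 1 = n + k by omega,
    Nat.choose_symm_add]

theorem pow_div_factorial_le_card_subtype_sum_eq (k n : ℕ) :
    (n : ℝ) ^ k / k.factorial ≤ Nat.card {x : Fin (k + 1) → ℕ // ∑ i, x i = n} := by
  rw [card_fin_succ_subtype_sum_eq]
  calc (n : ℝ) ^ k / k.factorial ≤ ((n + k + 1 - k : ℕ) : ℝ) ^ k / k.factorial := by
        gcongr; omega
    _ ≤ _ := Nat.pow_le_choose k (n + k)

theorem card_subtype_sum_eq_le_pow_div_factorial (k n : ℕ) :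
    (Nat.card {x : Fin (k + 1) → ℕ // ∑ i, x i = n} : ℝ) ≤
      ((n + k : ℕ) : ℝ) ^ k / k.factorial := by
  rw [card_fin_succ_subtype_sum_eq]
  exact Nat.choose_le_pow_div k (n + k)

end StarsAndBars

section MonotoneTuples

variable {α : Type*} [LinearOrder α] {m : ℕ}

theorem Multiset.exists_monotone_coe_ofFn_eq (s : Multiset α) (hs : card s = m) :
    ∃ a : Fin m → α, Monotone a ∧ (List.ofFn a : Multiset α) = s := by
  subst hs
  have hlength := length_sort (s := s) (r := (· ≤ ·))
  refine ⟨(s.sort (· ≤ ·)).get ∘ Fin.cast hlength.symm, ?_, ?_⟩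
  · exact (pairwise_sort s _).sortedLE.monotone_get.comp (Fin.cast_strictMono _).monotone
  · rw [Function.comp_def, ← List.ofFn_congr hlength, List.ofFn_get, sort_eq]

theorem eq_of_monotone_of_coe_ofFn_eq {a b : Fin m → α} (ha : Monotone a) (hb : Monotone b)
    (h : (List.ofFn a : Multiset α) = List.ofFn b) : a = b :=
  List.ofFn_injective <| (Multiset.coe_eq_coe.mp h).eq_of_sortedLE
    (List.sortedLE_ofFn_iff.mpr ha) (List.sortedLE_ofFn_iff.mpr hb)

end MonotoneTuples

def Nat.Partition.padZerosEquiv (m n : ℕ) :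
    {p : n.Partition // card p.parts ≤ m} ≃ {s : Multiset ℕ // card s = m ∧ s.sum = n} where
  toFun p := ⟨p.1.parts + replicate (m - card p.1.parts) 0, by simp [p.2], by
    simp [p.1.parts_sum]⟩
  invFun s := ⟨.ofSums n s.1 s.2.2, (card_le_card (filter_le _ _)).trans s.2.1.le⟩
  left_inv p := by
    ext1; ext1
    simp [filter_eq_self.mpr fun a ha => (p.1.parts_pos ha).ne', mem_replicate]
  right_inv := by
    rintro ⟨s, hcard, -⟩
    ext1
    change filter (· ≠ 0) s + replicate (m - card (filter (· ≠ 0) s)) 0 = s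
    have hsplit := filter_add_not (· ≠ 0) s
    conv_rhs => rw [← hsplit]
    congr 1
    rw [eq_comm, eq_replicate]
    refine ⟨?_, fun b hb => by simpa using (mem_filter.mp hb).2⟩
    have := congrArg card hsplit
    rw [card_add] at this
    omega

theorem pParts_eq_card_monotone (m n : ℕ) :
    pParts m n = Nat.card {a : Fin m → ℕ // Monotone a ∧ ∑ i, a i = n} := by
  rw [pParts, ← Nat.card_eq_fintype_card, Nat.card_congr (Nat.Partition.padZerosEquiv m n)]
  refine (Nat.card_congr (.ofBijective
    (fun a => ⟨List.ofFn a.1, by simp, by simp [List.sum_ofFn, a.2.2]⟩) ⟨?_, ?_⟩)).symm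
  · rintro ⟨a, ha, _⟩ ⟨b, hb, _⟩ h
    exact Subtype.ext (eq_of_monotone_of_coe_ofFn_eq ha hb (congrArg Subtype.val h))
  · rintro ⟨s, hcard, hsum⟩
    obtain ⟨a, ha, rfl⟩ := s.exists_monotone_coe_ofFn_eq hcard
    exact ⟨⟨a, ha, by simpa [List.sum_ofFn] using hsum⟩, rfl⟩

instance finite_subtype_monotone_sum_eq (m n : ℕ) :
    Finite {a : Fin m → ℕ // Monotone a ∧ ∑ i, a i = n} :=
  Finite.of_injective (fun a => (⟨a.1, a.2.2⟩ : {x : Fin m → ℕ // ∑ i, x i = n}))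
    fun _ _ h => Subtype.ext (Subtype.mk.inj h)

theorem card_subtype_sum_eq_le_factorial_mul (m n : ℕ) :
    Nat.card {x : Fin m → ℕ // ∑ i, x i = n} ≤
      m.factorial * Nat.card {a : Fin m → ℕ // Monotone a ∧ ∑ i, a i = n} := by
  let sortWithPerm (x : {x : Fin m → ℕ // ∑ i, x i = n}) :
      {a : Fin m → ℕ // Monotone a ∧ ∑ i, a i = n} × Equiv.Perm (Fin m) :=
    (⟨x.1 ∘ Tuple.sort x.1, Tuple.monotone_sort x.1, by simp [Equiv.sum_comp, x.2]⟩,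
      Tuple.sort x.1)
  have hinj : Function.Injective sortWithPerm := by
    rintro ⟨x, _⟩ ⟨y, _⟩ h
    obtain ⟨hsorted, hperm⟩ := Prod.ext_iff.mp h
    ext i
    have := congrFun (Subtype.ext_iff.mp hsorted) ((Tuple.sort y)⁻¹ i)
    simp only [sortWithPerm, Function.comp_apply] at this hperm
    rwa [hperm, Equiv.Perm.inv_def, Equiv.apply_symm_apply] at this
  simpa [Nat.card_prod, Fintype.card_perm, mul_comm] using Nat.card_le_card_of_injective _ hinj

theorem factorial_mul_card_monotone_le (m n : ℕ) :
    m.factorial * Nat.card {a : Fin m → ℕ // Monotone a ∧ ∑ i, a i = n} ≤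
      Nat.card {x : Fin m → ℕ // ∑ i, x i = n + ∑ i : Fin m, (i : ℕ)} := by
  let shiftPermute (aσ : {a : Fin m → ℕ // Monotone a ∧ ∑ i, a i = n} × Equiv.Perm (Fin m)) :
      {x : Fin m → ℕ // ∑ i, x i = n + ∑ i : Fin m, (i : ℕ)} :=
    ⟨(fun i => aσ.1.1 i + i) ∘ aσ.2, by
      rw [Function.comp_def, Equiv.sum_comp aσ.2 (fun i => aσ.1.1 i + i), Finset.sum_add_distrib,
        aσ.1.2.2]⟩
  have hstrict (a : {a : Fin m → ℕ // Monotone a ∧ ∑ i, a i = n}) :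
      StrictMono fun i : Fin m => a.1 i + i :=
    a.2.1.add_strictMono Fin.val_strictMono
  have hinj : Function.Injective shiftPermute := by
    rintro ⟨a, σ⟩ ⟨b, τ⟩ h
    have hcomp : (fun i => a.1 i + i) ∘ σ = (fun i => b.1 i + i) ∘ τ := congrArg Subtype.val h
    have hshift : (fun i : Fin m => a.1 i + i) = fun i => b.1 i + i := by
      rw [← (hstrict a).range_inj (hstrict b), ← σ.surjective.range_comp, hcomp,
        τ.surjective.range_comp]
    obtain rfl : a = b := Subtype.ext (funext fun i => by simpa using congrFun hshift i)
    exact Prod.ext rfl (Equiv.ext fun i => (hstrict a).injective (congrFun hcomp i))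
  simpa [Nat.card_prod, Fintype.card_perm, mul_comm] using Nat.card_le_card_of_injective _ hinj

theorem pow_le_factorial_mul_pParts (k n : ℕ) :
    (n : ℝ) ^ k ≤ (k + 1).factorial * k.factorial * pParts (k + 1) n := by
  have hcount : (Nat.card {x : Fin (k + 1) → ℕ // ∑ i, x i = n} : ℝ) ≤
      (k + 1).factorial * pParts (k + 1) n := by
    rw [pParts_eq_card_monotone]
    exact_mod_cast card_subtype_sum_eq_le_factorial_mul (k + 1) n
  have := (pow_div_factorial_le_card_subtype_sum_eq k n).trans hcount
  rw [div_le_iff₀ (by positivity)] at this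
  linarith

theorem factorial_mul_pParts_le_pow (k n : ℕ) :
    (k + 1).factorial * k.factorial * pParts (k + 1) n ≤
      ((n : ℝ) + (∑ i : Fin (k + 1), (i : ℕ) + k : ℕ)) ^ k := by
  have hcount : ((k + 1).factorial * pParts (k + 1) n : ℝ) ≤
      Nat.card {x : Fin (k + 1) → ℕ // ∑ i, x i = n + ∑ i : Fin (k + 1), (i : ℕ)} := by
    rw [pParts_eq_card_monotone]
    exact_mod_cast factorial_mul_card_monotone_le (k + 1) n
  have := hcount.trans (card_subtype_sum_eq_le_pow_div_factorial k _)
  rw [le_div_iff₀ (by positivity)] at this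
  push_cast at this ⊢
  rw [← add_assoc]
  linarith

theorem tendsto_add_pow_div_pow (d : ℝ) (k : ℕ) :
    Tendsto (fun n : ℕ => ((n : ℝ) + d) ^ k / (n : ℝ) ^ k) atTop (𝓝 1) := by
  simpa [← div_pow, inv_div] using ((tendsto_natCast_div_add_atTop d).inv₀ one_ne_zero).pow k

open Filter in
theorem pParts_asymptotic (m : ℕ) (hm : 0 < m) :
    Tendsto (fun n : ℕ => (pParts m n : ℝ) / (n : ℝ) ^ (m - 1)) atTop
      (nhds (1 / (Nat.factorial m * Nat.factorial (m - 1)))) := by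
  obtain ⟨k, rfl⟩ : ∃ k, m = k + 1 := ⟨m - 1, by omega⟩
  rw [Nat.add_sub_cancel]
  set C : ℝ := (k + 1).factorial * k.factorial
  have hC : 0 < C := by positivity
  set d := ∑ i : Fin (k + 1), (i : ℕ) + k
  refine tendsto_of_tendsto_of_tendsto_of_le_of_le' tendsto_const_nhds
    ((tendsto_add_pow_div_pow d k).div_const C) ?_ ?_
  · filter_upwards [eventually_gt_atTop 0] with n hn
    rw [div_le_div_iff₀ hC (by positivity)]
    linarith [pow_le_factorial_mul_pParts k n]
  · filter_upwards with n
    calc (pParts (k + 1) n : ℝ) / n ^ k = C * pParts (k + 1) n / n ^ k / C := by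
          field_simp
      _ ≤ ((n : ℝ) + d) ^ k / n ^ k / C := by
          gcongr
          exact factorial_mul_pParts_le_pow k n
end
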